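/- arXiv:math/9804099 — 2 statements merged into one kernel-verified Lean document; each statement's English description precedes it below -/
import Mathlib

section
/- Fix a > 0 and q = exp(-1/a). Then, as k → +∞ along the positive reals, Z^im_q(k) converges to L := ∫_0^∞ (e^{t²/a}-1)^{-1} · ∏_{j=0}^∞ (1-q^{j+2it})(1-q^{j-2it}) dt, and L is a strictly positive real number; in particular Z^im_q(k) tends to a nonzero limit as Re k → +∞. -/
open Filter Topology MeasureTheory

/-- `qp a w` is `q^w = exp(-w/a)` for `q = exp(-1/a)`. -/
noncomputable def qp (a : ℝ) (w : ℂ) : ℂ := Complex.exp (-w / (a : ℂ))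

/-- The truncated theta function
`δ_k(x;q) = ∏_{j≥0} ((1-q^{j+2x})(1-q^{j-2x}))/((1-q^{j+k+2x})(1-q^{j+k-2x}))`. -/
noncomputable def tdelta (a : ℝ) (k x : ℂ) : ℂ :=
  ∏' j : ℕ, ((1 - qp a ((j : ℂ) + 2 * x)) * (1 - qp a ((j : ℂ) - 2 * x))) /
    ((1 - qp a ((j : ℂ) + k + 2 * x)) * (1 - qp a ((j : ℂ) + k - 2 * x)))

/-- The imaginary q-zeta function `Z^im_q(k) = ∫_0^∞ (e^{t²/a}-1)⁻¹ δ_k(it;q) dt`. -/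
noncomputable def Zim (a : ℝ) (k : ℂ) : ℂ :=
  ∫ t in Set.Ioi (0 : ℝ),
    (Complex.exp ((t : ℂ) ^ 2 / (a : ℂ)) - 1)⁻¹ * tdelta a k (Complex.I * (t : ℂ))

/-!
For `Re k > 0` the truncated theta function factors as `δ_k(it) = P(t) Q_k(t)`, where
`P(t) = ∏ (1 - q^(j+2it)) (1 - q^(j-2it))` and `Q_k(t) = ∏ ((1 - q^(j+k+2it)) (1 - q^(j+k-2it)))⁻¹`.
Both products converge because their factors are `1 + O(q^j)`, and since the factors of `Q_k` are
even `1 + O(q^(j + Re k))`, `Q_k → 1` uniformly in `t` as `Re k → ∞`. The `j = 0` factor of `P`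
is `4 sin² (t / a)`, which cancels the pole of `(e^(t²/a) - 1)⁻¹` at `t = 0`, so the integrand is
dominated by `C / (1 + t²)` and dominated convergence gives the limit. Every factor of `P(t)` equals
`|1 - q^(j+2it)|² ≥ 0`, so the limit is the integral of a nonnegative function that is positive on
`(0, π a)`.
-/

section TprodBounds

variable {ι R : Type*} [NormedCommRing R] [NormOneClass R] [CompleteSpace R]
  {g : ι → R} {b : ι → ℝ}

theorem multipliable_of_norm_sub_one_le (hb : Summable b) (hg : ∀ i, ‖g i - 1‖ ≤ b i) :
    Multipliable g := by
  simpa using multipliable_one_add_of_summable (f := fun i ↦ g i - 1)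
    (hb.of_nonneg_of_le (fun _ ↦ norm_nonneg _) hg)

theorem norm_tprod_sub_one_le (hb : Summable b) (hg : ∀ i, ‖g i - 1‖ ≤ b i) :
    ‖∏' i, g i - 1‖ ≤ Real.exp (∑' i, b i) - 1 := by
  have hb0 : ∀ i, 0 ≤ b i := fun i ↦ (norm_nonneg _).trans (hg i)
  have hfin (s : Finset ι) : ‖∏ i ∈ s, g i - 1‖ ≤ Real.exp (∑' i, b i) - 1 :=
    calc ‖∏ i ∈ s, g i - 1‖ = ‖∏ i ∈ s, (1 + (g i - 1)) - 1‖ := by simp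
      _ ≤ Real.exp (∑ i ∈ s, ‖g i - 1‖) - 1 := s.norm_prod_one_add_sub_one_le _
      _ ≤ Real.exp (∑' i, b i) - 1 := by
        gcongr
        exact (Finset.sum_le_sum fun i _ ↦ hg i).trans (hb.sum_le_tsum s fun i _ ↦ hb0 i)
  exact le_of_tendsto ((multipliable_of_norm_sub_one_le hb hg).hasProd.sub_const 1).norm
    (.of_forall hfin)

theorem norm_tprod_le_exp (hb : Summable b) (hg : ∀ i, ‖g i - 1‖ ≤ b i) :
    ‖∏' i, g i‖ ≤ Real.exp (∑' i, b i) := by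
  have := norm_tprod_sub_one_le hb hg
  have := norm_le_norm_sub_add (∏' i, g i) 1
  rw [norm_one] at this
  linarith

end TprodBounds

theorem norm_one_sub_mul_one_sub_sub_one_le {R : Type*} [SeminormedRing R] [NormOneClass R]
    {u v : R} {r : ℝ} (hu : ‖u‖ ≤ r) (hv : ‖v‖ ≤ r) (hr : r ≤ 1) :
    ‖(1 - u) * (1 - v) - 1‖ ≤ 3 * r := by
  have h0 : 0 ≤ r := (norm_nonneg u).trans hu
  calc ‖(1 - u) * (1 - v) - 1‖ = ‖u * v - (u + v)‖ := by noncomm_ring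
    _ ≤ ‖u‖ * ‖v‖ + (‖u‖ + ‖v‖) :=
      (norm_sub_le _ _).trans (add_le_add (norm_mul_le _ _) (norm_add_le _ _))
    _ ≤ 3 * r := by nlinarith [norm_nonneg u, norm_nonneg v]

theorem sq_one_sub_le_norm_one_sub_mul_one_sub {R : Type*} [SeminormedRing R] [NormOneClass R]
    [NormMulClass R] {u v : R} {r : ℝ} (hu : ‖u‖ ≤ r) (hv : ‖v‖ ≤ r) (hr : r ≤ 1) :
    (1 - r) ^ 2 ≤ ‖(1 - u) * (1 - v)‖ := by
  have h1 (w : R) (hw : ‖w‖ ≤ r) : 1 - r ≤ ‖1 - w‖ := by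
    have := norm_sub_norm_le (1 : R) w
    rw [norm_one] at this
    linarith
  rw [norm_mul, sq]
  exact mul_le_mul (h1 u hu) (h1 v hv) (by linarith) (norm_nonneg _)

theorem norm_inv_sub_one_le {K : Type*} [NormedField K] {z : K} {m : ℝ} (hm : 0 < m)
    (hz : m ≤ ‖z‖) : ‖z⁻¹ - 1‖ ≤ ‖z - 1‖ / m := by
  have hz0 : z ≠ 0 := norm_pos_iff.mp (hm.trans_le hz)
  rw [show z⁻¹ - 1 = (1 - z) / z by field_simp, norm_div, norm_sub_rev]
  gcongr

open Complex in
theorem norm_one_sub_exp_I_mul (θ : ℝ) : ‖1 - exp (I * θ)‖ = 2 * |Real.sin (θ / 2)| := by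
  rw [norm_sub_rev, norm_exp_I_mul_ofReal_sub_one, norm_mul, Real.norm_eq_abs,
    Real.norm_eq_abs, abs_two]

theorem norm_qp (a : ℝ) (w : ℂ) : ‖qp a w‖ = Real.exp (-w.re / a) := by
  rw [qp, Complex.norm_exp, Complex.div_ofReal_re, Complex.neg_re]

noncomputable def thetaFactor (a : ℝ) (w : ℂ) (t : ℝ) : ℂ :=
  (1 - qp a (w + 2 * Complex.I * t)) * (1 - qp a (w - 2 * Complex.I * t))

section ThetaFactor

variable {a : ℝ}

theorem norm_thetaFactor_sub_one_le {w : ℂ} {r : ℝ} (hr : Real.exp (-w.re / a) ≤ r)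
    (hr1 : r ≤ 1) (t : ℝ) : ‖thetaFactor a w t - 1‖ ≤ 3 * r :=
  norm_one_sub_mul_one_sub_sub_one_le (by simpa [norm_qp]) (by simpa [norm_qp]) hr1

theorem sq_one_sub_le_norm_thetaFactor {w : ℂ} {r : ℝ} (hr : Real.exp (-w.re / a) ≤ r)
    (hr1 : r ≤ 1) (t : ℝ) : (1 - r) ^ 2 ≤ ‖thetaFactor a w t‖ :=
  sq_one_sub_le_norm_one_sub_mul_one_sub (by simpa [norm_qp]) (by simpa [norm_qp]) hr1

theorem thetaFactor_ofReal_eq_norm (a x t : ℝ) : thetaFactor a x t = ‖thetaFactor a x t‖ := by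
  have h : thetaFactor a x t = (Complex.normSq (1 - qp a (x + 2 * Complex.I * t)) : ℂ) := by
    rw [thetaFactor, ← Complex.mul_conj, map_sub, map_one, qp, qp, ← Complex.exp_conj]
    congr 3
    simp only [map_div₀, map_neg, map_add, map_mul, Complex.conj_ofReal, Complex.conj_I,
      map_ofNat]
    ring
  rw [h, Complex.norm_real, Real.norm_of_nonneg (Complex.normSq_nonneg _)]

theorem norm_thetaFactor_zero (a t : ℝ) : ‖thetaFactor a 0 t‖ = 4 * Real.sin (t / a) ^ 2 := by
  have h : thetaFactor a 0 t =
      (1 - Complex.exp (Complex.I * ↑(-(2 * t / a)))) *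
        (1 - Complex.exp (Complex.I * ↑(2 * t / a))) := by
    simp only [thetaFactor, qp]
    congr 3 <;> push_cast <;> ring
  rw [h, norm_mul, norm_one_sub_exp_I_mul, norm_one_sub_exp_I_mul, neg_div, Real.sin_neg,
    abs_neg, show 2 * t / a / 2 = t / a by ring, ← sq_abs]
  ring

end ThetaFactor

theorem tprod_eq_ofReal_norm {ι : Type*} {f : ι → ℂ} (hf : Multipliable f)
    (hreal : ∀ i, f i = ‖f i‖) : ∏' i, f i = ‖∏' i, f i‖ := by
  have h := hf.hasProd.norm.map Complex.ofRealHom Complex.continuous_ofReal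
  simp only [Function.comp_def, Complex.ofRealHom_eq_coe, ← hreal] at h
  exact h.tprod_eq

noncomputable def thetaProd (a t : ℝ) : ℂ := ∏' j : ℕ, thetaFactor a j t

noncomputable def thetaShiftInv (a : ℝ) (k : ℂ) (t : ℝ) : ℂ :=
  ∏' j : ℕ, (thetaFactor a (j + k) t)⁻¹

section ThetaProducts

variable {a : ℝ}

theorem exp_neg_one_div_lt_one (ha : 0 < a) : Real.exp (-1 / a) < 1 :=
  Real.exp_lt_one_iff.mpr (div_neg_of_neg_of_pos neg_one_lt_zero ha)

theorem exp_neg_natCast_re_div (a : ℝ) (j : ℕ) :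
    Real.exp (-(j : ℂ).re / a) = Real.exp (-1 / a) ^ j := by
  rw [Complex.natCast_re, ← Real.exp_nat_mul]
  ring_nf

theorem exp_neg_natCast_add_re_div (a : ℝ) (j : ℕ) (k : ℂ) :
    Real.exp (-((j : ℂ) + k).re / a) = Real.exp (-1 / a) ^ j * Real.exp (-k.re / a) := by
  rw [← exp_neg_natCast_re_div, ← Real.exp_add, Complex.add_re]
  ring_nf

theorem summable_geometric_exp_neg_one_div (ha : 0 < a) (c : ℝ) :
    Summable fun j : ℕ ↦ c * Real.exp (-1 / a) ^ j :=
  (summable_geometric_of_lt_one (Real.exp_nonneg _) (exp_neg_one_div_lt_one ha)).mul_left c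

theorem norm_thetaFactor_natCast_sub_one_le (ha : 0 < a) (j : ℕ) (t : ℝ) :
    ‖thetaFactor a j t - 1‖ ≤ 3 * Real.exp (-1 / a) ^ j :=
  norm_thetaFactor_sub_one_le (exp_neg_natCast_re_div a j).le
    (pow_le_one₀ (Real.exp_nonneg _) (exp_neg_one_div_lt_one ha).le) t

theorem multipliable_thetaFactor (ha : 0 < a) (t : ℝ) :
    Multipliable fun j : ℕ ↦ thetaFactor a j t :=
  multipliable_of_norm_sub_one_le (summable_geometric_exp_neg_one_div ha 3)
    (norm_thetaFactor_natCast_sub_one_le ha · t)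

theorem norm_thetaProd_le (ha : 0 < a) (t : ℝ) :
    ‖thetaProd a t‖ ≤ Real.exp (3 * (1 - Real.exp (-1 / a))⁻¹) * ‖thetaFactor a 0 t‖ := by
  have hq := exp_neg_one_div_lt_one ha
  have hb (j : ℕ) : ‖thetaFactor a ↑(j + 1) t - 1‖ ≤ 3 * Real.exp (-1 / a) ^ j :=
    (norm_thetaFactor_natCast_sub_one_le ha (j + 1) t).trans <| mul_le_mul_of_nonneg_left
      (pow_le_pow_of_le_one (Real.exp_nonneg _) hq.le j.le_succ) (by norm_num)
  have htail := norm_tprod_le_exp (summable_geometric_exp_neg_one_div ha 3) hb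
  rw [tsum_mul_left, tsum_geometric_of_lt_one (Real.exp_nonneg _) hq] at htail
  rw [thetaProd, tprod_eq_zero_mul'
    (multipliable_of_norm_sub_one_le (summable_geometric_exp_neg_one_div ha 3) hb),
    norm_mul, mul_comm, Nat.cast_zero]
  exact mul_le_mul_of_nonneg_right htail (norm_nonneg _)

theorem thetaProd_eq_ofReal_norm (ha : 0 < a) (t : ℝ) : thetaProd a t = ‖thetaProd a t‖ :=
  tprod_eq_ofReal_norm (multipliable_thetaFactor ha t) fun j ↦ by
    simpa using thetaFactor_ofReal_eq_norm a j t

theorem thetaFactor_natCast_ne_zero (ha : 0 < a) {t : ℝ} (ht₀ : 0 < t) (ht : t < Real.pi * a)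
    (j : ℕ) : thetaFactor a j t ≠ 0 := by
  rw [← norm_pos_iff]
  rcases j with _ | j
  · have : 0 < Real.sin (t / a) :=
      Real.sin_pos_of_pos_of_lt_pi (by positivity) ((div_lt_iff₀ ha).mpr ht)
    rw [Nat.cast_zero, norm_thetaFactor_zero]
    positivity
  · have hq : Real.exp (-1 / a) ^ (j + 1) < 1 :=
      pow_lt_one₀ (Real.exp_nonneg _) (exp_neg_one_div_lt_one ha) j.succ_ne_zero
    refine lt_of_lt_of_le ?_
      (sq_one_sub_le_norm_thetaFactor (exp_neg_natCast_re_div a _).le hq.le t)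
    nlinarith

theorem thetaProd_ne_zero (ha : 0 < a) {t : ℝ} (ht₀ : 0 < t) (ht : t < Real.pi * a) :
    thetaProd a t ≠ 0 := by
  simpa [thetaProd] using tprod_one_add_ne_zero_of_summable (f := fun j : ℕ ↦ thetaFactor a j t - 1)
    (by simpa using thetaFactor_natCast_ne_zero ha ht₀ ht)
    ((summable_geometric_exp_neg_one_div ha 3).of_nonneg_of_le (fun _ ↦ norm_nonneg _)
      (norm_thetaFactor_natCast_sub_one_le ha · t))

end ThetaProducts

section ThetaShift

variable {a : ℝ} {k : ℂ}

theorem norm_thetaFactor_add_inv_sub_one_le (ha : 0 < a) (hk : 0 < k.re) (j : ℕ) (t : ℝ) :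
    ‖(thetaFactor a (j + k) t)⁻¹ - 1‖ ≤
      3 * Real.exp (-k.re / a) / (1 - Real.exp (-k.re / a)) ^ 2 * Real.exp (-1 / a) ^ j := by
  set ε := Real.exp (-k.re / a)
  set q := Real.exp (-1 / a)
  have hε : ε < 1 := Real.exp_lt_one_iff.mpr (div_neg_of_neg_of_pos (neg_neg_of_pos hk) ha)
  have hqj : q ^ j ≤ 1 := pow_le_one₀ (Real.exp_nonneg _) (exp_neg_one_div_lt_one ha).le
  have hr : Real.exp (-((j : ℂ) + k).re / a) ≤ q ^ j * ε := (exp_neg_natCast_add_re_div a j k).le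
  have hr1 : q ^ j * ε ≤ ε := mul_le_of_le_one_left (Real.exp_nonneg _) hqj
  have hlow : (1 - ε) ^ 2 ≤ ‖thetaFactor a (j + k) t‖ :=
    (sq_one_sub_le_norm_thetaFactor hr (hr1.trans hε.le) t).trans' (by
      have := mul_nonneg (pow_nonneg (Real.exp_nonneg (-1 / a)) j) (Real.exp_nonneg (-k.re / a))
      nlinarith)
  calc ‖(thetaFactor a (j + k) t)⁻¹ - 1‖ ≤ ‖thetaFactor a (j + k) t - 1‖ / (1 - ε) ^ 2 :=
        norm_inv_sub_one_le (by nlinarith) hlow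
    _ ≤ 3 * (q ^ j * ε) / (1 - ε) ^ 2 := by
        gcongr
        exact norm_thetaFactor_sub_one_le hr (hr1.trans hε.le) t
    _ = 3 * ε / (1 - ε) ^ 2 * q ^ j := by ring

theorem multipliable_thetaFactor_add_inv (ha : 0 < a) (hk : 0 < k.re) (t : ℝ) :
    Multipliable fun j : ℕ ↦ (thetaFactor a (j + k) t)⁻¹ :=
  multipliable_of_norm_sub_one_le (summable_geometric_exp_neg_one_div ha _)
    (norm_thetaFactor_add_inv_sub_one_le ha hk · t)

theorem norm_thetaShiftInv_sub_one_le (ha : 0 < a) (hk : 0 < k.re) (t : ℝ) :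
    ‖thetaShiftInv a k t - 1‖ ≤ Real.exp (3 * Real.exp (-k.re / a) /
      (1 - Real.exp (-k.re / a)) ^ 2 * (1 - Real.exp (-1 / a))⁻¹) - 1 := by
  have h := norm_tprod_sub_one_le (summable_geometric_exp_neg_one_div ha _)
    (norm_thetaFactor_add_inv_sub_one_le ha hk · t)
  rwa [tsum_mul_left, tsum_geometric_of_lt_one (Real.exp_nonneg _)
    (exp_neg_one_div_lt_one ha)] at h

theorem tdelta_I_mul_eq (ha : 0 < a) (hk : 0 < k.re) (t : ℝ) :
    tdelta a k (Complex.I * t) = thetaProd a t * thetaShiftInv a k t := by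
  rw [thetaProd, thetaShiftInv, ← (multipliable_thetaFactor ha t).tprod_mul
    (multipliable_thetaFactor_add_inv ha hk t), tdelta]
  simp only [thetaFactor, div_eq_mul_inv, mul_assoc, add_assoc]

theorem tendstoUniformly_thetaShiftInv (ha : 0 < a) :
    TendstoUniformly (thetaShiftInv a) 1 (comap Complex.re atTop) := by
  have hε : Tendsto (fun k : ℂ ↦ Real.exp (-k.re / a)) (comap Complex.re atTop) (𝓝 0) := by
    refine Real.tendsto_exp_atBot.comp ?_
    simp_rw [neg_div]
    exact tendsto_neg_atTop_atBot.comp (tendsto_comap.atTop_div_const ha)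
  have hbound : Tendsto (fun ε : ℝ ↦
      Real.exp (3 * ε / (1 - ε) ^ 2 * (1 - Real.exp (-1 / a))⁻¹) - 1) (𝓝 0) (𝓝 0) := by
    have : ContinuousAt (fun ε : ℝ ↦
        Real.exp (3 * ε / (1 - ε) ^ 2 * (1 - Real.exp (-1 / a))⁻¹) - 1) 0 := by
      fun_prop (disch := norm_num)
    simpa using this.tendsto
  rw [Metric.tendstoUniformly_iff]
  intro δ hδ
  filter_upwards [(hbound.comp hε).eventually (gt_mem_nhds hδ),
    tendsto_comap.eventually (eventually_gt_atTop 0)] with k hk hk₀ t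
  rw [dist_comm, dist_eq_norm]
  exact (norm_thetaShiftInv_sub_one_le ha hk₀ t).trans_lt hk

end ThetaShift

noncomputable def boseWeight (a t : ℝ) : ℝ := (Real.exp (t ^ 2 / a) - 1)⁻¹

theorem cexp_sq_div_sub_one_inv (a t : ℝ) :
    (Complex.exp ((t : ℂ) ^ 2 / (a : ℂ)) - 1)⁻¹ = boseWeight a t := by
  rw [boseWeight]
  push_cast
  rfl

noncomputable def zimLimit (a : ℝ) : ℂ :=
  ∫ t in Set.Ioi (0 : ℝ), (Complex.exp ((t : ℂ) ^ 2 / (a : ℂ)) - 1)⁻¹ * thetaProd a t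

section Integrals

variable {a : ℝ}

theorem boseWeight_nonneg (ha : 0 < a) (t : ℝ) : 0 ≤ boseWeight a t :=
  inv_nonneg.mpr (sub_nonneg.mpr (Real.one_le_exp (by positivity)))

theorem boseWeight_pos (ha : 0 < a) {t : ℝ} (ht : t ≠ 0) : 0 < boseWeight a t :=
  inv_pos.mpr (sub_pos.mpr (Real.one_lt_exp_iff.mpr (by positivity)))

theorem sq_mul_boseWeight_le (ha : 0 < a) (t : ℝ) : t ^ 2 * boseWeight a t ≤ a := by
  rcases eq_or_ne t 0 with rfl | ht
  · simpa using ha.le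
  have hx : 0 < t ^ 2 / a := by positivity
  have hexp : t ^ 2 / a ≤ Real.exp (t ^ 2 / a) - 1 := by linarith [Real.add_one_le_exp (t ^ 2 / a)]
  rw [boseWeight, ← div_eq_mul_inv, div_le_iff₀ (hx.trans_le hexp)]
  rwa [div_le_iff₀' ha] at hexp

theorem boseWeight_mul_sin_sq_le (ha : 0 < a) (t : ℝ) :
    boseWeight a t * Real.sin (t / a) ^ 2 ≤ (a⁻¹ + a) / (1 + t ^ 2) := by
  have hw := sq_mul_boseWeight_le ha t
  have hw₀ := boseWeight_nonneg ha t
  have hnear : boseWeight a t * Real.sin (t / a) ^ 2 ≤ a⁻¹ :=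
    calc boseWeight a t * Real.sin (t / a) ^ 2 ≤ boseWeight a t * (t / a) ^ 2 :=
          mul_le_mul_of_nonneg_left Real.sin_sq_le_sq hw₀
      _ = t ^ 2 * boseWeight a t / a ^ 2 := by ring
      _ ≤ a / a ^ 2 := by gcongr
      _ = a⁻¹ := by field_simp
  have hfar : t ^ 2 * (boseWeight a t * Real.sin (t / a) ^ 2) ≤ a :=
    calc t ^ 2 * (boseWeight a t * Real.sin (t / a) ^ 2) ≤ t ^ 2 * boseWeight a t * 1 := by
          rw [← mul_assoc]; gcongr; exact Real.sin_sq_le_one _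
      _ ≤ a := by linarith
  rw [le_div_iff₀ (by positivity)]
  linarith

theorem measurable_thetaProd (a : ℝ) : Measurable (thetaProd a) := by
  unfold thetaProd thetaFactor qp
  fun_prop

theorem measurable_thetaShiftInv (a : ℝ) (k : ℂ) : Measurable (thetaShiftInv a k) := by
  unfold thetaShiftInv thetaFactor qp
  fun_prop

theorem integrable_boseWeight_mul_thetaProd (ha : 0 < a) :
    Integrable fun t : ℝ ↦ (boseWeight a t : ℂ) * thetaProd a t := by
  set M := Real.exp (3 * (1 - Real.exp (-1 / a))⁻¹)
  refine ((integrable_inv_one_add_sq.const_mul (4 * M * (a⁻¹ + a)))).mono'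
    ((by unfold boseWeight; fun_prop : Measurable fun t ↦ (boseWeight a t : ℂ)).mul
      (measurable_thetaProd a)).aestronglyMeasurable (.of_forall fun t ↦ ?_)
  rw [norm_mul, Complex.norm_real, Real.norm_of_nonneg (boseWeight_nonneg ha t)]
  calc boseWeight a t * ‖thetaProd a t‖ ≤ boseWeight a t * (M * (4 * Real.sin (t / a) ^ 2)) := by
        rw [← norm_thetaFactor_zero]
        exact mul_le_mul_of_nonneg_left (norm_thetaProd_le ha t) (boseWeight_nonneg ha t)
    _ = 4 * M * (boseWeight a t * Real.sin (t / a) ^ 2) := by ring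
    _ ≤ 4 * M * ((a⁻¹ + a) / (1 + t ^ 2)) := by gcongr; exact boseWeight_mul_sin_sq_le ha t
    _ = 4 * M * (a⁻¹ + a) * (1 + t ^ 2)⁻¹ := by ring

theorem zimLimit_eq_ofReal (ha : 0 < a) :
    zimLimit a = ↑(∫ t in Set.Ioi (0 : ℝ), boseWeight a t * ‖thetaProd a t‖) := by
  rw [← integral_complex_ofReal, zimLimit]
  congr 1 with t
  rw [cexp_sq_div_sub_one_inv, Complex.ofReal_mul]
  congr 1
  exact thetaProd_eq_ofReal_norm ha t

theorem integral_boseWeight_mul_norm_thetaProd_pos (ha : 0 < a) :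
    0 < ∫ t in Set.Ioi (0 : ℝ), boseWeight a t * ‖thetaProd a t‖ := by
  have hint : Integrable fun t ↦ boseWeight a t * ‖thetaProd a t‖ :=
    (integrable_boseWeight_mul_thetaProd ha).norm.congr (.of_forall fun t ↦ by
      simp [Real.norm_of_nonneg (boseWeight_nonneg ha t)])
  rw [setIntegral_pos_iff_support_of_nonneg_ae
    (.of_forall fun t ↦ mul_nonneg (boseWeight_nonneg ha t) (norm_nonneg _)) hint.integrableOn]
  refine lt_of_lt_of_le ?_ (measure_mono (s := Set.Ioo 0 (Real.pi * a)) fun t ht ↦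
    ⟨mul_ne_zero (boseWeight_pos ha ht.1.ne').ne'
      (norm_ne_zero_iff.mpr (thetaProd_ne_zero ha ht.1 ht.2)), ht.1⟩)
  simpa using mul_pos Real.pi_pos ha

theorem tendsto_Zim (ha : 0 < a) : Tendsto (Zim a) (comap Complex.re atTop) (𝓝 (zimLimit a)) := by
  set f : ℝ → ℂ := fun t ↦ (boseWeight a t : ℂ) * thetaProd a t
  have hf : IntegrableOn f (Set.Ioi 0) := (integrable_boseWeight_mul_thetaProd ha).integrableOn
  have hQ := tendstoUniformly_thetaShiftInv ha
  have hZim : ∀ᶠ k in comap Complex.re atTop,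
      ∫ t in Set.Ioi (0 : ℝ), f t * thetaShiftInv a k t = Zim a k := by
    filter_upwards [tendsto_comap.eventually (eventually_gt_atTop 0)] with k hk
    simp only [Zim, f, cexp_sq_div_sub_one_inv, tdelta_I_mul_eq ha hk, mul_assoc]
  have hbdd : ∀ᶠ k in comap Complex.re atTop, ∀ t, ‖thetaShiftInv a k t‖ ≤ 2 := by
    filter_upwards [Metric.tendstoUniformly_iff.mp hQ 1 one_pos] with k hk t
    have := norm_le_norm_sub_add (thetaShiftInv a k t) 1
    rw [← dist_eq_norm, dist_comm] at this
    simp only [Pi.one_apply, norm_one] at hk this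
    linarith [hk t]
  have hlimit : zimLimit a = ∫ t in Set.Ioi (0 : ℝ), f t := by
    simp only [zimLimit, f, cexp_sq_div_sub_one_inv]
  rw [hlimit]
  refine Tendsto.congr' hZim (tendsto_integral_filter_of_dominated_convergence
    (fun t ↦ ‖f t‖ * 2) (.of_forall fun k ↦ hf.aestronglyMeasurable.mul
      (measurable_thetaShiftInv a k).aestronglyMeasurable)
    (hbdd.mono fun k hk ↦ .of_forall fun t ↦ ?_) (hf.norm.mul_const 2) (.of_forall fun t ↦ ?_))
  · rw [norm_mul]
    exact mul_le_mul_of_nonneg_left (hk t) (norm_nonneg _)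
  · simpa using tendsto_const_nhds.mul (hQ.tendsto_at t)

end Integrals

/-- As `k → +∞` along the positive reals, `Z^im_q(k)` converges to
`L = ∫_0^∞ (e^{t²/a}-1)⁻¹ ∏_{j≥0}(1-q^{j+2it})(1-q^{j-2it}) dt`, a strictly positive real
number; in particular `Z^im_q(k)` tends to a nonzero limit as `Re k → +∞`. -/
theorem stmt9 (a : ℝ) (ha : 0 < a) :
    ∃ L : ℂ,
      L = (∫ t in Set.Ioi (0 : ℝ),
        (Complex.exp ((t : ℂ) ^ 2 / (a : ℂ)) - 1)⁻¹ *
          ∏' j : ℕ, (1 - qp a ((j : ℂ) + 2 * Complex.I * (t : ℂ))) *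
            (1 - qp a ((j : ℂ) - 2 * Complex.I * (t : ℂ)))) ∧
      Tendsto (fun k : ℝ => Zim a (k : ℂ)) atTop (𝓝 L) ∧
      L.im = 0 ∧ 0 < L.re ∧
      Tendsto (fun k : ℂ => Zim a k) (Filter.comap Complex.re atTop) (𝓝 L) := by
  have hofReal : Tendsto ((↑) : ℝ → ℂ) atTop (comap Complex.re atTop) :=
    tendsto_comap_iff.mpr tendsto_id
  refine ⟨zimLimit a, rfl, (tendsto_Zim ha).comp hofReal, ?_, ?_, tendsto_Zim ha⟩
  · rw [zimLimit_eq_ofReal ha, Complex.ofReal_im]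
  · rw [zimLimit_eq_ofReal ha, Complex.ofReal_re]
    exact integral_boseWeight_mul_norm_thetaProd_pos ha
end

section
/- Let a > 0, q = exp(-1/a), and k ∈ ℂ with Re k > 0, and let f : ℂ → ℂ be a function such that t ↦ f(-t²)·μ_k(it;q) and t ↦ f(-t²)·δ_k(it;q) are (Lebesgue) integrable on ℝ. Then ∫_{-∞}^{+∞} f(-t²)·μ_k(it;q) dt = ((1+q^k)/2)·∫_{-∞}^{+∞} f(-t²)·δ_k(it;q) dt. -/
open Filter Topology MeasureTheory

/-- The asymmetric truncated theta function
`μ_k(x;q) = ∏_{j≥0} ((1-q^{j+2x})(1-q^{j+1-2x}))/((1-q^{j+k+2x})(1-q^{j+k+1-2x}))`. -/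
noncomputable def tmu (a : ℝ) (k x : ℂ) : ℂ :=
  ∏' j : ℕ, ((1 - qp a ((j : ℂ) + 2 * x)) * (1 - qp a ((j : ℂ) + 1 - 2 * x))) /
    ((1 - qp a ((j : ℂ) + k + 2 * x)) * (1 - qp a ((j : ℂ) + k + 1 - 2 * x)))

/-!
With `u = q^{2x}`, `v = q^{-2x}` and `R(w) = (w; q)_∞ / (q^k w; q)_∞`, the two products factor as
`δ_k(x) = R(u) R(v)` and `μ_k(x) = R(u) R(q v)`, while `R(w) = (1 - w) / (1 - q^k w) · R(q w)`.
Since `u v = 1`, the rational identity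
`(1 - u)/(1 - q^k u) + (1 - v)/(1 - q^k v) = (1 + q^k) · (1 - u)/(1 - q^k u) · (1 - v)/(1 - q^k v)`
gives `μ_k(x) + μ_k(-x) = (1 + q^k) δ_k(x)` for every imaginary `x`; the substitution `t ↦ -t`
then turns `∫ f(-t²) μ_k(it) dt` into half the integral of the left-hand side.
-/

theorem multipliable_one_sub_mul_pow_div {z : ℂ} (hz : ‖z‖ < 1) (w w' : ℂ) :
    Multipliable fun j : ℕ => (1 - w * z ^ j) / (1 - w' * z ^ j) := by
  have hden : Tendsto (fun j : ℕ => 1 - w' * z ^ j) cofinite (𝓝 1) := by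
    rw [Nat.cofinite_eq_atTop]
    simpa using tendsto_const_nhds.sub
      ((tendsto_pow_atTop_nhds_zero_of_norm_lt_one hz).const_mul w')
  have hgeom : Summable fun j : ℕ => ‖(w' - w) * z ^ j‖ := by
    simpa [norm_mul, norm_pow] using
      (summable_geometric_of_lt_one (norm_nonneg _) hz).mul_left ‖w' - w‖
  have hsum : Summable fun j : ℕ => ‖(1 - w * z ^ j) / (1 - w' * z ^ j) - 1‖ := by
    refine (Summable.mul_tendsto_const hgeom.norm (hden.inv₀ one_ne_zero).norm).congr_cofinite ?_
    filter_upwards [hden.eventually_ne one_ne_zero] with j hj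
    rw [div_sub_one hj, ← norm_mul, div_eq_mul_inv]
    ring_nf
  simpa using multipliable_one_add_of_summable hsum

/-- `(w; z)_∞ / (c w; z)_∞` in q-Pochhammer notation. -/
noncomputable def qPochhammerRatio (z c w : ℂ) : ℂ :=
  ∏' j : ℕ, (1 - w * z ^ j) / (1 - c * w * z ^ j)

theorem qPochhammerRatio_eq_mul {z : ℂ} (hz : ‖z‖ < 1) (c w : ℂ) :
    qPochhammerRatio z c w = (1 - w) / (1 - c * w) * qPochhammerRatio z c (w * z) := by
  rw [qPochhammerRatio, qPochhammerRatio, tprod_eq_zero_mul']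
  · simp [pow_succ', mul_assoc]
  · simpa only [mul_assoc, pow_succ'] using multipliable_one_sub_mul_pow_div hz (w * z) (c * w * z)

theorem qp_add (a : ℝ) (w₁ w₂ : ℂ) : qp a (w₁ + w₂) = qp a w₁ * qp a w₂ := by
  rw [qp, qp, qp, ← Complex.exp_add]
  ring_nf

theorem norm_qp_lt_one {a : ℝ} (ha : 0 < a) {w : ℂ} (hw : 0 < w.re) : ‖qp a w‖ < 1 := by
  rw [qp, Complex.norm_exp, Real.exp_lt_one_iff, Complex.div_ofReal_re, Complex.neg_re, neg_div,
    neg_lt_zero]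
  positivity

theorem qp_ne_one {a : ℝ} (ha : 0 < a) {w : ℂ} (hw : 0 < w.re) : qp a w ≠ 1 := fun h => by
  simpa [h] using norm_qp_lt_one ha hw

theorem tdelta_eq_mul {a : ℝ} (ha : 0 < a) (k x : ℂ) :
    tdelta a k x = qPochhammerRatio (qp a 1) (qp a k) (qp a (2 * x)) *
      qPochhammerRatio (qp a 1) (qp a k) (qp a (-(2 * x))) := by
  have hz : ‖qp a 1‖ < 1 := norm_qp_lt_one ha (by simp)
  rw [qPochhammerRatio, qPochhammerRatio, ← (multipliable_one_sub_mul_pow_div hz _ _).tprod_mul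
    (multipliable_one_sub_mul_pow_div hz _ _), tdelta]
  refine tprod_congr fun j => ?_
  rw [mul_div_mul_comm]
  simp only [qp, ← Complex.exp_nat_mul, ← Complex.exp_add]
  ring_nf

theorem tmu_eq_mul {a : ℝ} (ha : 0 < a) (k x : ℂ) :
    tmu a k x = qPochhammerRatio (qp a 1) (qp a k) (qp a (2 * x)) *
      qPochhammerRatio (qp a 1) (qp a k) (qp a (-(2 * x)) * qp a 1) := by
  have hz : ‖qp a 1‖ < 1 := norm_qp_lt_one ha (by simp)
  rw [qPochhammerRatio, qPochhammerRatio, ← (multipliable_one_sub_mul_pow_div hz _ _).tprod_mul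
    (multipliable_one_sub_mul_pow_div hz _ _), tmu]
  refine tprod_congr fun j => ?_
  rw [mul_div_mul_comm]
  simp only [qp, ← Complex.exp_nat_mul, ← Complex.exp_add]
  ring_nf

theorem one_sub_div_add_one_sub_div_of_mul_eq_one {K : Type*} [Field K] {u v c : K}
    (huv : u * v = 1) (hu : c * u ≠ 1) (hv : c * v ≠ 1) :
    (1 - u) / (1 - c * u) + (1 - v) / (1 - c * v) =
      (1 + c) * ((1 - u) / (1 - c * u) * ((1 - v) / (1 - c * v))) := by
  have hu' : 1 - c * u ≠ 0 := sub_ne_zero.2 hu.symm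
  have hv' : 1 - c * v ≠ 0 := sub_ne_zero.2 hv.symm
  rw [div_add_div _ _ hu' hv', div_mul_div_comm, mul_div_assoc',
    div_left_inj' (mul_ne_zero hu' hv')]
  linear_combination (c - 1) * huv

theorem tmu_add_tmu_neg {a : ℝ} (ha : 0 < a) {k x : ℂ} (hcu : qp a (k + 2 * x) ≠ 1)
    (hcv : qp a (k - 2 * x) ≠ 1) :
    tmu a k x + tmu a k (-x) = (1 + qp a k) * tdelta a k x := by
  have hz : ‖qp a 1‖ < 1 := norm_qp_lt_one ha (by simp)
  have hμ_neg := tmu_eq_mul ha k (-x)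
  rw [mul_neg, neg_neg] at hμ_neg
  have huv : qp a (2 * x) * qp a (-(2 * x)) = 1 := by
    rw [← qp_add, add_neg_cancel]; simp [qp]
  rw [tmu_eq_mul ha, hμ_neg, tdelta_eq_mul ha, qPochhammerRatio_eq_mul hz _ (qp a (2 * x)),
    qPochhammerRatio_eq_mul hz _ (qp a (-(2 * x)))]
  linear_combination
    (qPochhammerRatio (qp a 1) (qp a k) (qp a (2 * x) * qp a 1) *
      qPochhammerRatio (qp a 1) (qp a k) (qp a (-(2 * x)) * qp a 1)) *
    one_sub_div_add_one_sub_div_of_mul_eq_one huv (by rwa [← qp_add])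
      (by rwa [← qp_add, ← sub_eq_add_neg])

theorem stmt14_general (a : ℝ) (ha : 0 < a) (k : ℂ) (hk : 0 < k.re) (f : ℂ → ℂ)
    (h1 : Integrable (fun t : ℝ => f (-(t : ℂ) ^ 2) * tmu a k (Complex.I * (t : ℂ)))) :
    ∫ t : ℝ, f (-(t : ℂ) ^ 2) * tmu a k (Complex.I * (t : ℂ)) =
      ((1 + qp a k) / 2) * ∫ t : ℝ, f (-(t : ℂ) ^ 2) * tdelta a k (Complex.I * (t : ℂ)) := by
  have hsymm : ∀ t : ℝ, f (-(t : ℂ) ^ 2) * tmu a k (Complex.I * t) +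
      f (-((-t : ℝ) : ℂ) ^ 2) * tmu a k (Complex.I * (-t : ℝ)) =
        (1 + qp a k) * (f (-(t : ℂ) ^ 2) * tdelta a k (Complex.I * t)) := fun t => by
    have := tmu_add_tmu_neg ha (x := Complex.I * t) (qp_ne_one ha (by simpa using hk))
      (qp_ne_one ha (by simpa using hk))
    push_cast
    rw [neg_sq, mul_neg]
    linear_combination f (-(t : ℂ) ^ 2) * this
  have h := integral_add h1 h1.comp_neg
  rw [funext hsymm, integral_const_mul,
    integral_neg_eq_self (fun t : ℝ => f (-(t : ℂ) ^ 2) * tmu a k (Complex.I * t))] at h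
  linear_combination -h / 2

/-- Symmetrization relation: `∫_{-i∞}^{i∞} f(x²)μ_k dx = ((1+q^k)/2)∫_{-i∞}^{i∞} f(x²)δ_k dx`,
written with `x = it`. -/
theorem stmt14 (a : ℝ) (ha : 0 < a) (k : ℂ) (hk : 0 < k.re) (f : ℂ → ℂ)
    (h1 : Integrable (fun t : ℝ => f (-(t : ℂ) ^ 2) * tmu a k (Complex.I * (t : ℂ))))
    (h2 : Integrable (fun t : ℝ => f (-(t : ℂ) ^ 2) * tdelta a k (Complex.I * (t : ℂ)))) :
    ∫ t : ℝ, f (-(t : ℂ) ^ 2) * tmu a k (Complex.I * (t : ℂ)) =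
      ((1 + qp a k) / 2) * ∫ t : ℝ, f (-(t : ℂ) ^ 2) * tdelta a k (Complex.I * (t : ℂ)) :=
  stmt14_general a ha k hk f h1
end
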